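/- arXiv:2510.10798 — 2 statements merged into one kernel-verified Lean document; each statement's English description precedes it below -/
import Mathlib

section
/- Let g be a harmonic polynomial on ℝ³ and u(x) = (2x·∇g(x) + g(x))x − |x|²∇g(x). If g = Σ_ℓ g_ℓ is the decomposition into harmonic homogeneous components of degree ℓ, then div u = Σ_ℓ (2ℓ² + 5ℓ + 3)·g_ℓ = Σ_ℓ (ℓ+1)(2ℓ+3)·g_ℓ. In particular, if div u is constant then g_ℓ = 0 for all ℓ ≥ 1, i.e., g is constant and u(x) = c·x. -/
/-!
Expanding, `div u = 3g + 5 x·∇g + 2 x·∇(x·∇g) − |x|²Δg`. For harmonic `g` the last term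
vanishes, and by Euler's identity `x·∇` acts on the degree-`ℓ` component as multiplication
by `ℓ`, so `div u = Σ_ℓ (ℓ+1)(2ℓ+3) g_ℓ`. These coefficients never vanish, so a constant
divergence forces `g_ℓ = 0` for every `ℓ ≥ 1`.
-/

open MvPolynomial

/-- The components of `u(x) = (2x·∇g(x) + g(x))·x − |x|²·∇g(x)` as polynomials. -/
noncomputable def uField (g : MvPolynomial (Fin 3) ℝ) (i : Fin 3) : MvPolynomial (Fin 3) ℝ :=
  (2 * (∑ k : Fin 3, X k * pderiv k g) + g) * X i - (∑ k : Fin 3, X k ^ 2) * pderiv i g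

open Finset

namespace MvPolynomial

variable {σ R : Type*} [CommSemiring R]

section Euler

variable [Fintype σ]

noncomputable def eulerOp : MvPolynomial σ R →ₗ[R] MvPolynomial σ R :=
  ∑ i, LinearMap.mulLeft R (X i) ∘ₗ (pderiv i).toLinearMap

lemma eulerOp_apply (p : MvPolynomial σ R) : eulerOp p = ∑ i, X i * pderiv i p := by
  simp [eulerOp]

lemma eulerOp_homogeneousComponent (n : ℕ) (p : MvPolynomial σ R) :
    eulerOp (homogeneousComponent n p) = n • homogeneousComponent n p := by
  rw [eulerOp_apply]
  exact (homogeneousComponent_isHomogeneous n p).sum_X_mul_pderiv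

lemma sum_pderiv_mul_X (f : MvPolynomial σ R) :
    ∑ i, pderiv i (f * X i) = eulerOp f + Fintype.card σ • f := by
  simp only [pderiv_mul, pderiv_X_self, mul_one, sum_add_distrib, sum_const, card_univ,
    mul_comm (pderiv _ f), eulerOp_apply]

lemma pderiv_sum_X_sq [DecidableEq σ] (i : σ) :
    pderiv i (∑ k, X k ^ 2 : MvPolynomial σ R) = 2 * X i := by
  simp [pderiv_X, Pi.single_apply]

lemma sum_pderiv_sum_X_sq_mul_pderiv (g : MvPolynomial σ R) :
    ∑ i, pderiv i ((∑ k, X k ^ 2) * pderiv i g) =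
      2 * eulerOp g + (∑ k, X k ^ 2) * ∑ i, pderiv i (pderiv i g) := by
  classical
  simp only [pderiv_mul, pderiv_sum_X_sq, sum_add_distrib, eulerOp_apply, mul_sum, mul_assoc]

end Euler

lemma homogeneousComponent_sum_smul_homogeneousComponent (c : ℕ → R) (p : MvPolynomial σ R)
    (m : ℕ) :
    homogeneousComponent m (∑ ℓ ∈ range (p.totalDegree + 1), c ℓ • homogeneousComponent ℓ p) =
      c m • homogeneousComponent m p := by
  simp only [map_sum, map_smul, homogeneousComponent_of_mem (homogeneousComponent_mem _ p),
    smul_ite, smul_zero, sum_ite_eq, mem_range]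
  split_ifs with hm
  · rfl
  · rw [homogeneousComponent_eq_zero m p (by omega), smul_zero]

lemma eq_C_coeff_zero_of_homogeneousComponent_eq_zero {p : MvPolynomial σ R}
    (h : ∀ m, 1 ≤ m → homogeneousComponent m p = 0) : p = C (coeff 0 p) := by
  conv_lhs => rw [← p.sum_homogeneousComponent]
  rw [sum_eq_single 0 (fun m _ hm => h m (by omega)) (by simp), homogeneousComponent_zero]

end MvPolynomial

lemma sum_pderiv_uField (g : MvPolynomial (Fin 3) ℝ) :
    ∑ i, pderiv i (uField g i) =
      3 * g + 5 * eulerOp g + 2 * eulerOp (eulerOp g)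
        - (∑ k, X k ^ 2) * ∑ i, pderiv i (pderiv i g) := by
  simp only [uField, ← eulerOp_apply, map_sub, sum_sub_distrib, sum_pderiv_mul_X,
    sum_pderiv_sum_X_sq_mul_pderiv, two_mul, map_add, Fintype.card_fin]
  ring

lemma uField_C (c : ℝ) (i : Fin 3) : uField (C c) i = C c * X i := by
  simp [uField]

lemma sum_pderiv_uField_of_harmonic {g : MvPolynomial (Fin 3) ℝ}
    (hg : ∑ i, pderiv i (pderiv i g) = 0) :
    ∑ i, pderiv i (uField g i) =
      ∑ ℓ ∈ range (g.totalDegree + 1),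
        (((ℓ : ℝ) + 1) * (2 * (ℓ : ℝ) + 3)) • homogeneousComponent ℓ g := by
  rw [sum_pderiv_uField, hg, mul_zero, sub_zero]
  conv_lhs => rw [← g.sum_homogeneousComponent]
  simp only [map_sum, map_nsmul, eulerOp_homogeneousComponent, mul_sum, ← sum_add_distrib]
  refine sum_congr rfl fun ℓ _ => ?_
  simp only [nsmul_eq_mul, smul_eq_C_mul, map_mul, map_add, map_natCast, map_ofNat, map_one]
  ring

/-- For a harmonic polynomial `g = Σ_ℓ g_ℓ` (homogeneous components `g_ℓ`),
`div u = Σ_ℓ (ℓ+1)(2ℓ+3) g_ℓ`; in particular if `div u` is constant then `g` is a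
constant `c` and `u(x) = c·x`. -/
theorem stmt17 (g : MvPolynomial (Fin 3) ℝ)
    (hg : ∑ i : Fin 3, pderiv i (pderiv i g) = 0) :
    (∑ i : Fin 3, pderiv i (uField g i)) =
      ∑ ℓ ∈ Finset.range (g.totalDegree + 1),
        (((ℓ : ℝ) + 1) * (2 * (ℓ : ℝ) + 3)) • homogeneousComponent ℓ g ∧
    ((∃ c : ℝ, (∑ i : Fin 3, pderiv i (uField g i)) = C c) →
      ∃ c : ℝ, g = C c ∧ ∀ i : Fin 3, uField g i = C c * X i) := by
  have hdiv := sum_pderiv_uField_of_harmonic hg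
  refine ⟨hdiv, fun ⟨c, hc⟩ => ?_⟩
  have hzero : ∀ m, 1 ≤ m → homogeneousComponent m g = 0 := by
    intro m hm
    have h := congrArg (homogeneousComponent m) (hdiv.symm.trans hc)
    rw [homogeneousComponent_sum_smul_homogeneousComponent,
      homogeneousComponent_eq_zero m (C c) (by rw [totalDegree_C]; omega)] at h
    exact (smul_eq_zero.mp h).resolve_left (by positivity)
  have hconst := eq_C_coeff_zero_of_homogeneousComponent_eq_zero hzero
  refine ⟨coeff 0 g, hconst, fun i => ?_⟩
  conv_lhs => rw [hconst]
  exact uField_C _ i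
end

section
/- Let Y be a harmonic homogeneous polynomial of degree ℓ ≥ 0 on ℝ³, λ, μ ∈ ℝ with μ > 0 and 2μ + λ > 0, τ = (λ+μ)/μ, and α_ℓ = −((ℓ+3)τ + 2)/(2(ℓ(τ+2)+1)). Then the vector field u(x) = (2ℓ+1)·(Y(x)·x + α_ℓ·(|x|² − 1)·∇Y(x)) − ∇Y(x) satisfies the Lamé equation μΔu + (λ+μ)∇(div u) = 0 on ℝ³, and for |x| = 1 it equals (ℓ+1)Y(x)x − ∇_σY(x) (where ∇_σY(x) = ∇Y(x) − ℓY(x)x is the tangential gradient). -/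
open MvPolynomial
open scoped BigOperators

/-- Partial derivative in direction `i` of a scalar function on `ℝ³`. -/
noncomputable def pd (i : Fin 3) (f : (Fin 3 → ℝ) → ℝ) (x : Fin 3 → ℝ) : ℝ :=
  fderiv ℝ f x (Pi.single i 1)

/-- Laplacian of a scalar function on `ℝ³`. -/
noncomputable def lap3 (f : (Fin 3 → ℝ) → ℝ) (x : Fin 3 → ℝ) : ℝ :=
  ∑ i : Fin 3, pd i (fun y => pd i f y) x

/-- Divergence of a vector field on `ℝ³`. -/
noncomputable def div3 (u : (Fin 3 → ℝ) → (Fin 3 → ℝ)) (x : Fin 3 → ℝ) : ℝ :=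
  ∑ i : Fin 3, pd i (fun y => u y i) x

/-!
Everything is a polynomial, so the computation can be done with formal partial derivatives.
Since `Δ` commutes with `∂ᵢ`, each `∂ᵢY` is harmonic, and differentiating Euler's identity
`∑ xⱼ ∂ⱼY = ℓ Y` gives `∑ xⱼ ∂ⱼ∂ᵢY = (ℓ - 1) ∂ᵢY`. With the product rule for `Δ` this yields
`Δuᵢ = (2ℓ+1)(2 + (4ℓ+2)α) ∂ᵢY` and `div u = (2ℓ+1)(ℓ + 3 + 2ℓα) Y`, so the Lamé operator applied
to `u` is a scalar multiple of `∇Y`, and `α_ℓ` is exactly the value making that scalar vanish.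
-/

namespace MvPolynomial

section Laplacian

variable {σ R : Type*} [CommRing R]

theorem pderiv_pderiv_comm (i j : σ) (p : MvPolynomial σ R) :
    pderiv i (pderiv j p) = pderiv j (pderiv i p) := by
  classical
  -- the commutator of two derivations is a derivation, and this one kills every `X k`
  have h : ⁅pderiv (R := R) i, pderiv (R := R) j⁆ = 0 := by
    refine derivation_ext fun k => ?_
    rw [Derivation.commutator_apply]
    simp [pderiv_X, Pi.single_apply, apply_ite]
  rw [← sub_eq_zero, ← Derivation.commutator_apply, h, Derivation.zero_apply]

variable [Fintype σ]

noncomputable def laplacian : MvPolynomial σ R →ₗ[R] MvPolynomial σ R :=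
  ∑ i, (pderiv i).toLinearMap ∘ₗ (pderiv i).toLinearMap

theorem laplacian_apply (p : MvPolynomial σ R) :
    laplacian p = ∑ i, pderiv i (pderiv i p) := by
  simp [laplacian]

noncomputable def sumSq : MvPolynomial σ R := ∑ i, X i ^ 2

theorem laplacian_C_mul (c : R) (p : MvPolynomial σ R) :
    laplacian (C c * p) = C c * laplacian p := by
  simp [laplacian_apply, Finset.mul_sum]

theorem pderiv_laplacian (i : σ) (p : MvPolynomial σ R) :
    pderiv i (laplacian p) = laplacian (pderiv i p) := by
  simp only [laplacian_apply, map_sum, pderiv_pderiv_comm i]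

theorem laplacian_mul (p q : MvPolynomial σ R) :
    laplacian (p * q) =
      laplacian p * q + 2 * ∑ i, pderiv i p * pderiv i q + p * laplacian q := by
  simp only [laplacian_apply, pderiv_mul, map_add, Finset.mul_sum, Finset.sum_mul,
    ← Finset.sum_add_distrib]
  exact Finset.sum_congr rfl fun _ _ => by ring

theorem laplacian_X (i : σ) : laplacian (X i : MvPolynomial σ R) = 0 := by
  classical
  simp [laplacian_apply, pderiv_X, Pi.single_apply, apply_ite]

theorem pderiv_sumSq (i : σ) : pderiv i (sumSq : MvPolynomial σ R) = 2 * X i := by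
  classical
  simp [sumSq, pderiv_X, Pi.single_apply]

theorem laplacian_sumSq :
    laplacian (sumSq : MvPolynomial σ R) = C (2 * Fintype.card σ : R) := by
  simp [laplacian_apply, pderiv_sumSq, ← map_ofNat C, mul_comm]

theorem sum_X_mul_pderiv_pderiv {p : MvPolynomial σ R} {c : R}
    (h : ∑ j, X j * pderiv j p = C c * p) (i : σ) :
    ∑ j, X j * pderiv j (pderiv i p) = C (c - 1) * pderiv i p := by
  classical
  have h' := congr(pderiv i $h)
  simp only [map_sum, pderiv_mul, pderiv_C, zero_mul, zero_add, pderiv_X, Pi.single_apply,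
    ite_mul, one_mul, Finset.sum_add_distrib, Finset.sum_ite_eq', Finset.mem_univ, if_true,
    pderiv_pderiv_comm i] at h'
  rw [map_sub, map_one]
  linear_combination h'

variable {p : MvPolynomial σ R} {c : R}

theorem laplacian_mul_X (hp : laplacian p = 0) (i : σ) :
    laplacian (p * X i) = 2 * pderiv i p := by
  classical
  simp [laplacian_mul, hp, laplacian_X, pderiv_X, Pi.single_apply]

theorem laplacian_sumSq_mul (hp : laplacian p = 0) (he : ∑ j, X j * pderiv j p = C c * p) :
    laplacian (sumSq * p) = C (2 * Fintype.card σ + 4 * c) * p := by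
  rw [laplacian_mul, laplacian_sumSq, hp]
  simp only [pderiv_sumSq, mul_assoc, ← Finset.mul_sum, he]
  simp only [map_add, map_mul, map_ofNat, map_natCast]
  ring

theorem sum_pderiv_mul_X_s18 (he : ∑ j, X j * pderiv j p = C c * p) :
    ∑ j, pderiv j (p * X j) = C (c + Fintype.card σ) * p := by
  simp only [pderiv_mul, pderiv_X_self, Finset.sum_add_distrib, mul_comm _ (X _), he,
    Finset.sum_const, Finset.card_univ, nsmul_eq_mul]
  simp only [map_add, map_natCast]
  ring

theorem sum_pderiv_sumSq_mul_pderiv (hp : laplacian p = 0)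
    (he : ∑ j, X j * pderiv j p = C c * p) :
    ∑ j, pderiv j (sumSq * pderiv j p) = C (2 * c) * p := by
  simp only [pderiv_mul, pderiv_sumSq, Finset.sum_add_distrib, mul_assoc, ← Finset.mul_sum, he,
    ← laplacian_apply, hp, mul_zero, add_zero]
  simp only [map_mul, map_ofNat]
  ring

noncomputable def lameAnsatz (a α : R) (p : MvPolynomial σ R) (i : σ) : MvPolynomial σ R :=
  C a * (p * X i + C α * (sumSq - 1) * pderiv i p) - pderiv i p

theorem laplacian_lameAnsatz (a α : R) (hp : laplacian p = 0)
    (he : ∑ j, X j * pderiv j p = C c * p) (i : σ) :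
    laplacian (lameAnsatz a α p i) =
      C (a * (2 + α * (2 * Fintype.card σ + 4 * (c - 1)))) * pderiv i p := by
  have hpi : laplacian (pderiv i p) = 0 := by rw [← pderiv_laplacian, hp, map_zero]
  rw [lameAnsatz, mul_assoc (C α), sub_mul, one_mul, map_sub, laplacian_C_mul, map_add,
    laplacian_mul_X hp, laplacian_C_mul, map_sub, laplacian_sumSq_mul hpi
    (sum_X_mul_pderiv_pderiv he i), hpi]
  simp only [map_add, map_mul, map_sub, map_one, map_ofNat, map_natCast]
  ring

theorem sum_pderiv_lameAnsatz (a α : R) (hp : laplacian p = 0)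
    (he : ∑ j, X j * pderiv j p = C c * p) :
    ∑ j, pderiv j (lameAnsatz a α p j) = C (a * (c + Fintype.card σ + 2 * α * c)) * p := by
  have hdiv : ∑ j, pderiv j (pderiv j p) = 0 := by rw [← laplacian_apply, hp]
  simp only [lameAnsatz, mul_assoc (C α), sub_mul, one_mul, map_sub, pderiv_C_mul, map_add,
    Finset.sum_sub_distrib, Finset.sum_add_distrib, ← Finset.mul_sum, sum_pderiv_mul_X_s18 he,
    sum_pderiv_sumSq_mul_pderiv hp he, hdiv]
  simp only [map_add, map_mul, map_ofNat, map_natCast]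
  ring

end Laplacian

theorem hasFDerivAt_eval {σ 𝕜 : Type*} [Fintype σ] [NontriviallyNormedField 𝕜]
    (p : MvPolynomial σ 𝕜) (x : σ → 𝕜) :
    HasFDerivAt (fun y => eval y p)
      (∑ j, eval x (pderiv j p) • (ContinuousLinearMap.proj j : (σ → 𝕜) →L[𝕜] 𝕜)) x := by
  classical
  induction p using MvPolynomial.induction_on with
  | C a =>
    simp only [eval_C]
    refine (hasFDerivAt_const (𝕜 := 𝕜) a x).congr_fderiv ?_
    ext v
    simp
  | add p q hp hq =>
    simp only [eval_add]
    refine (hp.add hq).congr_fderiv ?_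
    ext v
    simp [add_mul, Finset.sum_add_distrib]
  | mul_X p j hp =>
    simp only [eval_mul, eval_X]
    refine (hp.mul (hasFDerivAt_apply j x)).congr_fderiv ?_
    ext v
    simp [pderiv_X, Pi.single_apply, apply_ite (eval x), mul_add,
      Finset.sum_add_distrib, Finset.mul_sum, mul_comm, mul_left_comm]

end MvPolynomial

theorem pd_eval (p : MvPolynomial (Fin 3) ℝ) (i : Fin 3) (x : Fin 3 → ℝ) :
    pd i (fun y => eval y p) x = eval x (pderiv i p) := by
  simp [pd, (hasFDerivAt_eval p x).fderiv, Pi.single_apply]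

theorem lap3_eval (p : MvPolynomial (Fin 3) ℝ) (x : Fin 3 → ℝ) :
    lap3 (fun y => eval y p) x = eval x (laplacian p) := by
  simp [lap3, pd_eval, laplacian_apply]

theorem div3_eq_eval {u : (Fin 3 → ℝ) → Fin 3 → ℝ} {U : Fin 3 → MvPolynomial (Fin 3) ℝ}
    (h : ∀ x i, u x i = eval x (U i)) :
    div3 u = fun x => eval x (∑ j, pderiv j (U j)) := by
  ext x
  simp [div3, h, pd_eval]

theorem lame_coeff_eq_zero {ℓ lam mu τ α : ℝ} (hℓ : 0 ≤ ℓ) (hmu : 0 < mu)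
    (hlm : 0 < 2 * mu + lam) (hτ : τ = (lam + mu) / mu)
    (hα : α = -((ℓ + 3) * τ + 2) / (2 * (ℓ * (τ + 2) + 1))) :
    mu * (2 + (4 * ℓ + 2) * α) + (lam + mu) * (ℓ + 3 + 2 * ℓ * α) = 0 := by
  have hτmu : lam + mu = τ * mu := by rw [hτ]; field_simp
  have hτ2 : 0 < τ + 2 := by rw [hτ]; field_simp; linarith
  have hden : ℓ * (τ + 2) + 1 ≠ 0 := by positivity
  have hαmul : α * (2 * (ℓ * (τ + 2) + 1)) = -((ℓ + 3) * τ + 2) := by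
    rw [hα]; field_simp
  linear_combination mu * hαmul + (ℓ + 3 + 2 * ℓ * α) * hτmu

/-- For a harmonic homogeneous polynomial `Y` of degree `ℓ` and admissible Lamé constants
`λ, μ`, with `τ = (λ+μ)/μ` and `α_ℓ = −((ℓ+3)τ+2)/(2(ℓ(τ+2)+1))`, the field
`u(x) = (2ℓ+1)(Y(x)x + α_ℓ(|x|²−1)∇Y(x)) − ∇Y(x)` solves the Lamé equation
`μΔu + (λ+μ)∇(div u) = 0` on `ℝ³`, and on `|x| = 1` equals
`(ℓ+1)Y(x)x − ∇_σY(x)` where `∇_σY(x) = ∇Y(x) − ℓY(x)x`. -/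
theorem stmt18 (ℓ : ℕ) (Y : MvPolynomial (Fin 3) ℝ) (hY : Y.IsHomogeneous ℓ)
    (hYh : ∑ i : Fin 3, pderiv i (pderiv i Y) = 0)
    (lam mu : ℝ) (hmu : 0 < mu) (hlm : 0 < 2 * mu + lam)
    (τ αℓ : ℝ) (hτ : τ = (lam + mu) / mu)
    (hα : αℓ = -(((ℓ : ℝ) + 3) * τ + 2) / (2 * ((ℓ : ℝ) * (τ + 2) + 1)))
    (u : (Fin 3 → ℝ) → (Fin 3 → ℝ))
    (hu : ∀ (x : Fin 3 → ℝ) (i : Fin 3),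
      u x i = (2 * (ℓ : ℝ) + 1) *
          (eval x Y * x i + αℓ * ((∑ j : Fin 3, x j ^ 2) - 1) * eval x (pderiv i Y))
        - eval x (pderiv i Y)) :
    (∀ (x : Fin 3 → ℝ) (i : Fin 3),
        mu * lap3 (fun y => u y i) x + (lam + mu) * pd i (div3 u) x = 0) ∧
    (∀ x : Fin 3 → ℝ, (∑ j : Fin 3, x j ^ 2) = 1 → ∀ i : Fin 3,
        u x i = ((ℓ : ℝ) + 1) * eval x Y * x i
          - (eval x (pderiv i Y) - (ℓ : ℝ) * eval x Y * x i)) := by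
  have hU : ∀ x i, u x i = eval x (lameAnsatz (2 * (ℓ : ℝ) + 1) αℓ Y i) := fun x i => by
    simp [hu, lameAnsatz, sumSq]
  have hharm : laplacian Y = 0 := (laplacian_apply Y).trans hYh
  have heuler : ∑ j, X j * pderiv j Y = C (ℓ : ℝ) * Y := by
    rw [hY.sum_X_mul_pderiv, nsmul_eq_mul, map_natCast]
  have hcoeff := lame_coeff_eq_zero (Nat.cast_nonneg ℓ) hmu hlm hτ hα
  refine ⟨fun x i => ?_, fun x hx i => by rw [hu, hx]; ring⟩
  rw [div3_eq_eval hU, sum_pderiv_lameAnsatz _ _ hharm heuler, pd_eval, pderiv_C_mul]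
  simp only [hU, lap3_eval, laplacian_lameAnsatz _ _ hharm heuler, eval_mul, eval_C,
    Fintype.card_fin, Nat.cast_ofNat]
  linear_combination ((2 * (ℓ : ℝ) + 1) * eval x (pderiv i Y)) * hcoeff
end
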